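/- Let m ≥ 1 and suppose F = ∑_{p=1}^m F_p, where each F_p is a square-integrable σ(X) ∨ σ(Z)-measurable random variable such that ∑_{a∈A} D_a F_p converges in L² and equals p·F_p almost surely. Then Var(F) ≤ ∑_{a∈A} E[(D_a F)²]. -/

import Mathlib

open MeasureTheory ProbabilityTheory

section Setup

variable {Ω E₀ : Type*} {A : Type*} {E : A → Type*}
variable [MeasurableSpace Ω] [MeasurableSpace E₀] [∀ a, MeasurableSpace (E a)]

/-- The σ-algebra σ(Z) generated by the latent variable `Z`. -/
def sigmaZ (Z : Ω → E₀) : MeasurableSpace Ω :=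
  MeasurableSpace.comap Z inferInstance

/-- The σ-algebra σ(X) generated by the whole family `X`. -/
def sigmaX (X : ∀ a, Ω → E a) : MeasurableSpace Ω :=
  ⨆ a, MeasurableSpace.comap (X a) inferInstance

/-- The σ-algebra σ((X_b)_{b ∈ L}) ∨ σ(Z). -/
def sigmaSub (X : ∀ a, Ω → E a) (Z : Ω → E₀) (L : Finset A) : MeasurableSpace Ω :=
  (⨆ b ∈ L, MeasurableSpace.comap (X b) inferInstance) ⊔ sigmaZ Z

/-- The σ-algebra 𝒢^a = σ((X_b)_{b ≠ a}) ∨ σ(Z). -/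
def Gminus (X : ∀ a, Ω → E a) (Z : Ω → E₀) (a : A) : MeasurableSpace Ω :=
  (⨆ b ≠ a, MeasurableSpace.comap (X b) inferInstance) ⊔ sigmaZ Z

/-- The discrete Malliavin gradient `D_a F = F - E[F | 𝒢^a]`. -/
noncomputable def Dgrad (P : Measure Ω) (X : ∀ a, Ω → E a) (Z : Ω → E₀)
    (a : A) (F : Ω → ℝ) : Ω → ℝ :=
  fun ω => F ω - (P[F | Gminus X Z a]) ω

/-- Conditional independence of the family `X` given `Z`:
`ℙ(X_a ∈ s | 𝒢^a) = ℙ(X_a ∈ s | σ(Z))` a.s. for every `a` and measurable `s`. -/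
def CondIndep (P : Measure Ω) (X : ∀ a, Ω → E a) (Z : Ω → E₀) : Prop :=
  ∀ (a : A) (s : Set (E a)), MeasurableSet s →
    (P[(X a ⁻¹' s).indicator (fun _ => (1 : ℝ)) | Gminus X Z a])
      =ᵐ[P] (P[(X a ⁻¹' s).indicator (fun _ => (1 : ℝ)) | sigmaZ Z])

/-- The random vector `X = (X_a)_{a ∈ A}`. -/
def Xvec (X : ∀ a, Ω → E a) : Ω → ∀ a, E a := fun ω a => X a ω

/-- The difference operator `Δ^a F = f(X) - f(X^{a}, X'_a)`. -/
noncomputable def Delta [DecidableEq A] (X X' : ∀ a, Ω → E a)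
    (f : (∀ a, E a) → ℝ) (a : A) : Ω → ℝ :=
  fun ω => f (Xvec X ω) - f (Function.update (Xvec X ω) a (X' a ω))

/-- The combined family of spaces indexed by `A ⊕ A`. -/
def pairFam (E : A → Type*) : A ⊕ A → Type _ := Sum.elim E E

instance pairFamMS : ∀ s, MeasurableSpace (pairFam E s)
  | .inl a => inferInstanceAs (MeasurableSpace (E a))
  | .inr a => inferInstanceAs (MeasurableSpace (E a))

/-- The combined family `(X, X')` indexed by `A ⊕ A`. -/
def pairX (X X' : ∀ a, Ω → E a) : ∀ s, Ω → pairFam E s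
  | .inl a => X a
  | .inr a => X' a

/-- `X'_a` has the same conditional distribution given `Z` as `X_a`, for each `a`. -/
def SameCondLaw (P : Measure Ω) (X X' : ∀ a, Ω → E a) (Z : Ω → E₀) : Prop :=
  ∀ (a : A) (s : Set (E a)), MeasurableSet s →
    (P[(X a ⁻¹' s).indicator (fun _ => (1 : ℝ)) | sigmaZ Z])
      =ᵐ[P] (P[(X' a ⁻¹' s).indicator (fun _ => (1 : ℝ)) | sigmaZ Z])

/-- The carré du champ operator
`Γ(F,G) = (1/2) ∑_a E[(Δ^a F)(Δ^a G) | σ(X) ∨ σ(Z)]` (finite index set). -/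
noncomputable def Gamma [Fintype A] [DecidableEq A] (P : Measure Ω)
    (X X' : ∀ a, Ω → E a) (Z : Ω → E₀) (f g : (∀ a, E a) → ℝ) : Ω → ℝ :=
  fun ω => (1/2) * ∑ a,
    (P[fun ω' => Delta X X' f a ω' * Delta X X' g a ω' | sigmaX X ⊔ sigmaZ Z]) ω

end Setup

/-!
For each `a`, `D_a = 1 - E[· | 𝒢^a]` is the orthogonal projection of `L²` onto the orthogonal
complement of the `𝒢^a`-measurable functions. The hypothesis says that `F_p` is an eigenvector of
the symmetric operator `∑_a D_a` with eigenvalue `p`, so the `F_p` are pairwise orthogonal, and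
`∑_a E[(D_a F)²] = ∑_a ⟪D_a F, F⟫ = ∑_p p ‖F_p‖² ≥ ∑_p ‖F_p‖² = E[F²] ≥ Var(F)`.
-/

open Filter Topology

section OrthogonalProjections

variable {ι E : Type*} [NormedAddCommGroup E] [InnerProductSpace ℝ E]
  (K : ι → Submodule ℝ E) [∀ i, (K i).HasOrthogonalProjection]

theorem inner_eq_zero_of_hasSum_starProjection {x y : E} {c d : ℝ} (hcd : c ≠ d)
    (hx : HasSum (fun i => (K i).starProjection x) (c • x))
    (hy : HasSum (fun i => (K i).starProjection y) (d • y)) :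
    inner ℝ x y = 0 := by
  have hxy : HasSum (fun i => inner ℝ x ((K i).starProjection y)) (d * inner ℝ x y) := by
    simpa only [innerSL_apply_apply, real_inner_smul_right] using (innerSL ℝ x).hasSum hy
  have hyx : HasSum (fun i => inner ℝ x ((K i).starProjection y)) (c * inner ℝ x y) := by
    have hsymm : ∀ i, inner ℝ y ((K i).starProjection x) = inner ℝ x ((K i).starProjection y) :=
      fun i => by rw [← Submodule.inner_starProjection_left_eq_right, real_inner_comm]
    simpa only [innerSL_apply_apply, real_inner_smul_right, hsymm, real_inner_comm x y]
      using (innerSL ℝ y).hasSum hx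
  by_contra hxy_ne
  exact hcd (mul_right_cancel₀ hxy_ne (hyx.unique hxy))

theorem hasSum_norm_sq_starProjection {x y : E}
    (h : HasSum (fun i => (K i).starProjection x) y) :
    HasSum (fun i => ‖(K i).starProjection x‖ ^ 2) (inner ℝ x y) := by
  have hQ : ∀ i, ‖(K i).starProjection x‖ ^ 2 = inner ℝ x ((K i).starProjection x) := by
    intro i
    rw [← real_inner_self_eq_norm_sq, Submodule.inner_starProjection_left_eq_right,
      Submodule.starProjection_eq_self_iff.2 ((K i).starProjection_apply_mem x)]
  simpa only [hQ, innerSL_apply_apply] using (innerSL ℝ x).hasSum h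

theorem inner_sum_smul_sum_eq_of_pairwise_inner_eq_zero {J : Type*} [Fintype J] {x : J → E}
    (hx : Pairwise fun j k => inner ℝ (x j) (x k) = 0) (c : J → ℝ) :
    inner ℝ (∑ j, c j • x j) (∑ k, x k) = ∑ j, c j * ‖x j‖ ^ 2 := by
  simp only [sum_inner, inner_sum, real_inner_smul_left]
  refine Finset.sum_congr rfl fun j _ => ?_
  rw [Finset.sum_eq_single j (fun k _ hkj => by rw [hx hkj, mul_zero]) (by simp),
    real_inner_self_eq_norm_sq]

theorem norm_sq_sum_le_tsum_norm_sq_starProjection {J : Type*} [Fintype J] (x : J → E)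
    (c : J → ℝ) (hc_inj : Function.Injective c) (hc : ∀ j, 1 ≤ c j)
    (hx : ∀ j, HasSum (fun i => (K i).starProjection (x j)) (c j • x j)) :
    ‖∑ j, x j‖ ^ 2 ≤ ∑' i, ‖(K i).starProjection (∑ j, x j)‖ ^ 2 := by
  have horth : Pairwise fun j k => inner ℝ (x j) (x k) = 0 := fun j k hjk =>
    inner_eq_zero_of_hasSum_starProjection K (hc_inj.ne hjk) (hx j) (hx k)
  have hsum : HasSum (fun i => (K i).starProjection (∑ j, x j)) (∑ j, c j • x j) := by
    simpa only [map_sum] using hasSum_sum fun j _ => hx j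
  rw [(hasSum_norm_sq_starProjection K hsum).tsum_eq, real_inner_comm,
    inner_sum_smul_sum_eq_of_pairwise_inner_eq_zero horth, ← real_inner_self_eq_norm_sq]
  calc inner ℝ (∑ j, x j) (∑ j, x j) = inner ℝ (∑ j, (1 : ℝ) • x j) (∑ j, x j) := by simp
    _ = ∑ j, 1 * ‖x j‖ ^ 2 := inner_sum_smul_sum_eq_of_pairwise_inner_eq_zero horth _
    _ ≤ ∑ j, c j * ‖x j‖ ^ 2 :=
      Finset.sum_le_sum fun j _ => mul_le_mul_of_nonneg_right (hc j) (sq_nonneg _)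

end OrthogonalProjections

namespace MeasureTheory

section L2

variable {α : Type*} {m m0 : MeasurableSpace α} {μ : Measure α}

theorem MemLp.toLp_finsetSum {E : Type*} [NormedAddCommGroup E] {p : ENNReal} {ι : Type*}
    (s : Finset ι) {f : ι → α → E} (hf : ∀ i, MemLp (f i) p μ) :
    (memLp_finsetSum' s fun i _ => hf i).toLp (∑ i ∈ s, f i) = ∑ i ∈ s, (hf i).toLp (f i) := by
  classical
  induction s using Finset.induction_on with
  | empty => rfl
  | insert i s hi ih =>
    simp only [Finset.sum_insert hi, ← ih]
    exact MemLp.toLp_add _ _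

theorem hasSum_toLp_of_tendsto_eLpNorm {E : Type*} [NormedAddCommGroup E] {p : ENNReal}
    [Fact (1 ≤ p)] {ι : Type*} {f : ι → α → E} {g : α → E}
    (hf : ∀ i, MemLp (f i) p μ) (hg : MemLp g p μ)
    (h : Tendsto (fun s : Finset ι => eLpNorm (∑ i ∈ s, f i - g) p μ) atTop (𝓝 0)) :
    HasSum (fun i => (hf i).toLp (f i)) (hg.toLp g) := by
  rw [HasSum, tendsto_iff_norm_sub_tendsto_zero]
  refine ((ENNReal.tendsto_toReal ENNReal.zero_ne_top).comp h).congr fun s => ?_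
  rw [← MemLp.toLp_finsetSum, ← MemLp.toLp_sub, Lp.norm_toLp]
  rfl

theorem MemLp.norm_toLp_sq {f : α → ℝ} (hf : MemLp f 2 μ) :
    ‖hf.toLp f‖ ^ 2 = ∫ x, f x ^ 2 ∂μ := by
  rw [← real_inner_self_eq_norm_sq, L2.inner_def]
  refine integral_congr_ae ?_
  filter_upwards [hf.coeFn_toLp] with x hx
  simp [hx, sq]

theorem MemLp.toLp_sub_condExp [IsFiniteMeasure μ] [hm : Fact (m ≤ m0)] {f : α → ℝ}
    (hf : MemLp f 2 μ) :
    (hf.sub (hf.condExp one_le_two)).toLp (f - μ[f | m])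
      = (lpMeas ℝ ℝ m 2 μ)ᗮ.starProjection (hf.toLp f) := by
  rw [Submodule.starProjection_orthogonal_val, hf.toLp_sub (hf.condExp one_le_two)]
  congr 1
  refine Lp.ext ?_
  filter_upwards [(hf.condExp one_le_two).coeFn_toLp, hf.condExpL2_ae_eq_condExp (𝕜 := ℝ) hm.out]
    with x h1 h2
  rw [h1, ← h2]
  rfl

theorem integral_sq_le_tsum_integral_sq_sub_condExp [IsFiniteMeasure μ] {ι J : Type*} [Fintype J]
    {𝒢 : ι → MeasurableSpace α} (h𝒢 : ∀ i, 𝒢 i ≤ m0) {f : J → α → ℝ}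
    (hf : ∀ j, MemLp (f j) 2 μ) (c : J → ℝ) (hc_inj : Function.Injective c) (hc : ∀ j, 1 ≤ c j)
    (heigen : ∀ j, Tendsto (fun s : Finset ι =>
      eLpNorm (∑ i ∈ s, (f j - μ[f j | 𝒢 i]) - c j • f j) 2 μ) atTop (𝓝 0)) :
    ∫ x, (∑ j, f j) x ^ 2 ∂μ ≤ ∑' i, ∫ x, ((∑ j, f j) - μ[∑ j, f j | 𝒢 i]) x ^ 2 ∂μ := by
  have : ∀ i, Fact (𝒢 i ≤ m0) := fun i => ⟨h𝒢 i⟩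
  have hF : MemLp (∑ j, f j) 2 μ := memLp_finsetSum' _ fun j _ => hf j
  have key := norm_sq_sum_le_tsum_norm_sq_starProjection (fun i => (lpMeas ℝ ℝ (𝒢 i) 2 μ)ᗮ)
    (fun j => (hf j).toLp (f j)) c hc_inj hc fun j => by
      rw [← MemLp.toLp_const_smul]
      simp_rw [← (hf j).toLp_sub_condExp]
      exact hasSum_toLp_of_tendsto_eLpNorm _ _ (heigen j)
  rw [← MemLp.toLp_finsetSum _ hf, hF.norm_toLp_sq] at key
  simpa only [← hF.toLp_sub_condExp, MemLp.norm_toLp_sq] using key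

end L2

end MeasureTheory

theorem efron_stein_finite_chaos_general
    {Ω E₀ : Type*} {A : Type*} {E : A → Type*}
    [MeasurableSpace Ω] [MeasurableSpace E₀] [∀ a, MeasurableSpace (E a)]
    (P : Measure Ω) [IsProbabilityMeasure P]
    (Z : Ω → E₀) (hZ : Measurable Z)
    (X : ∀ a, Ω → E a) (hX : ∀ a, Measurable (X a))
    (m : ℕ)
    (Fp : ℕ → Ω → ℝ)
    (hFp : ∀ p ∈ Finset.Icc 1 m, MemLp (Fp p) 2 P)
    -- every `F_p` lies in the `p`-th chaos: `∑_a D_a F_p` converges in `L²` to `p • F_p`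
    (hEigen : ∀ p ∈ Finset.Icc 1 m,
      ∃ S : Ω → ℝ, MemLp S 2 P ∧
        Filter.Tendsto
          (fun s : Finset A => eLpNorm ((∑ a ∈ s, Dgrad P X Z a (Fp p)) - S) 2 P)
          Filter.atTop (nhds 0)
        ∧ S =ᵐ[P] fun ω => (p : ℝ) * Fp p ω)
    (F : Ω → ℝ) (hFdef : F = fun ω => ∑ p ∈ Finset.Icc 1 m, Fp p ω) :
    variance F P ≤ ∑' a, ∫ ω, (Dgrad P X Z a F ω) ^ 2 ∂P := by
  have hGminus_le : ∀ a, Gminus X Z a ≤ ‹MeasurableSpace Ω› := fun a =>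
    sup_le (iSup₂_le fun b _ => (hX b).comap_le) hZ.comap_le
  have hF : F = ∑ p : Finset.Icc 1 m, Fp p := by
    ext ω
    rw [hFdef, Finset.sum_apply]
    exact (Finset.sum_coe_sort _ _).symm
  have hchaos : ∀ p : Finset.Icc 1 m, Tendsto (fun s : Finset A =>
      eLpNorm (∑ a ∈ s, (Fp p - P[Fp p | Gminus X Z a]) - (p : ℝ) • Fp p) 2 P) atTop (𝓝 0) := by
    rintro ⟨p, hp⟩
    obtain ⟨S, -, hS_tendsto, hS⟩ := hEigen p hp
    refine hS_tendsto.congr fun s => eLpNorm_congr_ae ?_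
    filter_upwards [hS] with ω hω
    simp [Dgrad, hω]
  have hF_memLp : MemLp F 2 P := hF ▸ memLp_finsetSum' _ fun p _ => hFp p p.2
  calc variance F P ≤ ∫ ω, F ω ^ 2 ∂P := variance_le_expectation_sq hF_memLp.aestronglyMeasurable
    _ ≤ ∑' a, ∫ ω, (Dgrad P X Z a F ω) ^ 2 ∂P := by
      rw [hF]
      exact integral_sq_le_tsum_integral_sq_sub_condExp hGminus_le (fun p => hFp p p.2)
        (fun p => (p : ℝ)) (Nat.cast_injective.comp Subtype.val_injective)
        (fun p => by exact_mod_cast (Finset.mem_Icc.1 p.2).1) hchaos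

/-- Efron–Stein-type inequality for a finite sum of chaoses:
`Var(F) ≤ ∑_a E[(D_a F)²]`. -/
theorem efron_stein_finite_chaos
    {Ω E₀ : Type*} {A : Type*} {E : A → Type*}
    [MeasurableSpace Ω] [MeasurableSpace E₀] [∀ a, MeasurableSpace (E a)]
    [StandardBorelSpace E₀] [∀ a, StandardBorelSpace (E a)] [Countable A]
    (P : Measure Ω) [IsProbabilityMeasure P]
    (Z : Ω → E₀) (hZ : Measurable Z)
    (X : ∀ a, Ω → E a) (hX : ∀ a, Measurable (X a))
    (hCI : CondIndep P X Z)
    (m : ℕ) (hm : 1 ≤ m)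
    (Fp : ℕ → Ω → ℝ)
    (hFp : ∀ p ∈ Finset.Icc 1 m, MemLp (Fp p) 2 P)
    (hFpmeas : ∀ p ∈ Finset.Icc 1 m, Measurable[sigmaX X ⊔ sigmaZ Z] (Fp p))
    -- every `F_p` lies in the `p`-th chaos: `∑_a D_a F_p` converges in `L²` to `p • F_p`
    (hEigen : ∀ p ∈ Finset.Icc 1 m,
      ∃ S : Ω → ℝ, MemLp S 2 P ∧
        Filter.Tendsto
          (fun s : Finset A => eLpNorm ((∑ a ∈ s, Dgrad P X Z a (Fp p)) - S) 2 P)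
          Filter.atTop (nhds 0)
        ∧ S =ᵐ[P] fun ω => (p : ℝ) * Fp p ω)
    (F : Ω → ℝ) (hFdef : F = fun ω => ∑ p ∈ Finset.Icc 1 m, Fp p ω) :
    variance F P ≤ ∑' a, ∫ ω, (Dgrad P X Z a F ω) ^ 2 ∂P :=
  efron_stein_finite_chaos_general P Z hZ X hX m Fp hFp hEigen F hFdef
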